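/- (Theorem S2, mean-zero representation from the efficient influence function for the counterfactual control mean among the treated.) Under the sensitivity parametrization, E[Z·Y(0)] = E[ Z·ε0(X)·μ0(X) + ε0(X)·e(X)·(1−Z)·(Y−μ0(X))/(1−e(X)) ]. -/

import Mathlib

/-!
The treated term of the influence function already has the right mean: conditioning on `X`,
`E[Z Y(0) | X] = ε₀ e μ₀` by the sensitivity relation, and `E[Z ε₀ μ₀ | X] = ε₀ μ₀ e`. The
weighted control residual `ε₀ e/(1-e) · (1-Z)(Y - μ₀)` has mean zero, because
`E[(1-Z) Y | X] = μ₀ (1-e) = μ₀ E[1-Z | X]`. Its weight and `μ₀` need not be bounded, so this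
orthogonality is first proved on the `X`-measurable sets where both are bounded by `n`, and then
passed to the limit `n → ∞`.
-/

open MeasureTheory Set

theorem integral_eq_zero_of_setIntegral_eq_zero {Ω : Type*} [MeasurableSpace Ω] {μ : Measure Ω}
    {s : ℕ → Set Ω} (hs : ∀ n, MeasurableSet (s n)) (hmono : Monotone s) (hcover : ⋃ n, s n = univ)
    {h : Ω → ℝ} (hh : Integrable h μ) (h0 : ∀ n, ∫ ω in s n, h ω ∂μ = 0) :
    ∫ ω, h ω ∂μ = 0 := by
  have hlim := tendsto_setIntegral_of_monotone hs hmono hh.integrableOn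
  rw [hcover, setIntegral_univ] at hlim
  exact tendsto_nhds_unique hlim (by simp only [h0, tendsto_const_nhds])

section ConditionalExpectation

variable {Ω : Type*} {m m₀ : MeasurableSpace Ω} {μ : Measure Ω}

theorem integral_mul_eq_integral_mul_condExp (hm : m ≤ m₀) [SigmaFinite (μ.trim hm)]
    {f g : Ω → ℝ} (hf : StronglyMeasurable[m] f) (hfg : Integrable (f * g) μ)
    (hg : Integrable g μ) :
    ∫ ω, f ω * g ω ∂μ = ∫ ω, f ω * μ[g|m] ω ∂μ :=
  (integral_condExp hm (f := f * g)).symm.trans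
    (integral_congr_ae (condExp_mul_of_stronglyMeasurable_left hf hfg hg))

theorem condExp_one_sub [IsFiniteMeasure μ] (hm : m ≤ m₀) {f : Ω → ℝ} (hf : Integrable f μ) :
    μ[fun ω => 1 - f ω|m] =ᵐ[μ] fun ω => 1 - μ[f|m] ω := by
  filter_upwards [condExp_sub (integrable_const 1) hf m] with ω hω
  rw [Pi.sub_apply, condExp_const hm] at hω
  exact hω

theorem integral_mul_sub_mul_eq_zero [IsFiniteMeasure μ] (hm : m ≤ m₀) {c b A D : Ω → ℝ}
    (hc : Measurable[m] c) (hb : Measurable[m] b) (hA : Integrable A μ) (hD : Integrable D μ)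
    (hAD : μ[A|m] =ᵐ[μ] b * μ[D|m])
    (hint : Integrable (fun ω => c ω * (A ω - b ω * D ω)) μ) :
    ∫ ω, c ω * (A ω - b ω * D ω) ∂μ = 0 := by
  set B : ℕ → Set Ω := fun n => {ω | max |c ω| |b ω| ≤ n}
  have hB : ∀ n, MeasurableSet[m] (B n) := fun n =>
    ((continuous_abs.measurable.comp hc).max (continuous_abs.measurable.comp hb)) measurableSet_Iic
  refine integral_eq_zero_of_setIntegral_eq_zero (fun n => hm _ (hB n)) ?_ ?_ hint fun n => ?_
  · exact fun i j hij ω hω => le_trans (α := ℝ) hω (Nat.cast_le.mpr hij)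
  · exact eq_univ_of_forall fun ω => mem_iUnion.mpr (exists_nat_ge (max |c ω| |b ω|))
  set χc := (B n).indicator c
  have hχc : StronglyMeasurable[m] χc := (hc.indicator (hB n)).stronglyMeasurable
  have hχc_bdd : ∀ ω, ‖χc ω‖ ≤ n := fun ω => by
    by_cases hω : ω ∈ B n
    · simpa [χc, hω] using (le_max_left _ _).trans hω
    · simp [χc, hω]
  have hχcb_bdd : ∀ ω, ‖χc ω * b ω‖ ≤ n * n := fun ω => by
    by_cases hω : ω ∈ B n
    · simpa [χc, hω, abs_mul] using
        mul_le_mul ((le_max_left _ _).trans hω) ((le_max_right _ _).trans hω) (abs_nonneg _)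
          n.cast_nonneg
    · simp [χc, hω, mul_self_nonneg]
  have hint_A : Integrable (fun ω => χc ω * A ω) μ :=
    hA.bdd_mul (hχc.mono hm).aestronglyMeasurable (ae_of_all _ hχc_bdd)
  have hint_D : Integrable (fun ω => χc ω * b ω * D ω) μ :=
    hD.bdd_mul ((hχc.mul hb.stronglyMeasurable).mono hm).aestronglyMeasurable
      (ae_of_all _ hχcb_bdd)
  have hsplit : ∀ ω, (B n).indicator (fun ω => c ω * (A ω - b ω * D ω)) ω
      = χc ω * A ω - χc ω * b ω * D ω := fun ω => by
    by_cases hω : ω ∈ B n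
    · simp only [χc, indicator_of_mem hω]; ring
    · simp [χc, hω]
  rw [← integral_indicator (hm _ (hB n))]
  calc ∫ ω, (B n).indicator (fun ω => c ω * (A ω - b ω * D ω)) ω ∂μ
      = ∫ ω, χc ω * A ω ∂μ - ∫ ω, χc ω * b ω * D ω ∂μ := by
        rw [← integral_sub hint_A hint_D]; exact integral_congr_ae (ae_of_all _ hsplit)
    _ = ∫ ω, χc ω * μ[A|m] ω ∂μ - ∫ ω, χc ω * b ω * μ[D|m] ω ∂μ := by
        congr 1
        · exact integral_mul_eq_integral_mul_condExp hm hχc hint_A hA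
        · exact integral_mul_eq_integral_mul_condExp hm (hχc.mul hb.stronglyMeasurable) hint_D hD
    _ = 0 := by
        rw [sub_eq_zero]
        refine integral_congr_ae ?_
        filter_upwards [hAD] with ω hω
        simp only [hω, Pi.mul_apply]
        ring

end ConditionalExpectation

section SensitivityModel

variable {Ω : Type*} {F : MeasurableSpace Ω} {P : Measure Ω} {mX : MeasurableSpace Ω}
  {Z Y0 Y eX mu0 eps0 : Ω → ℝ}

theorem condExp_treated_control_outcome_eq
    (hcontrol : (fun ω => (1 - Z ω) * Y0 ω) = fun ω => (1 - Z ω) * Y ω)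
    (heX : eX =ᵐ[P] P[Z|mX]) (hlt : ∀ᵐ ω ∂P, eX ω < 1)
    (hmu0 : (fun ω => mu0 ω * (1 - eX ω)) =ᵐ[P] P[fun ω => (1 - Z ω) * Y ω|mX])
    (hsens0 : ∀ᵐ ω ∂P, (1 - eX ω) * (P[fun ω' => Z ω' * Y0 ω'|mX]) ω
        = eps0 ω * eX ω * (P[fun ω' => (1 - Z ω') * Y0 ω'|mX]) ω) :
    P[fun ω => Z ω * Y0 ω|mX] =ᵐ[P] fun ω => eps0 ω * mu0 ω * P[Z|mX] ω := by
  filter_upwards [hsens0, hlt, hmu0, heX] with ω hs hlt hmu heω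
  rw [hcontrol, ← hmu] at hs
  have hne : 1 - eX ω ≠ 0 := by linarith
  rw [← heω]
  exact mul_left_cancel₀ hne (by linear_combination hs)

theorem integral_weighted_control_residual_eq_zero [IsFiniteMeasure P] (hmX : mX ≤ F)
    {w : Ω → ℝ} (hw : Measurable[mX] w) (hmu0meas : Measurable[mX] mu0)
    (hZint : Integrable Z P) (hcontrol_int : Integrable (fun ω => (1 - Z ω) * Y ω) P)
    (heX : eX =ᵐ[P] P[Z|mX])
    (hmu0 : (fun ω => mu0 ω * (1 - eX ω)) =ᵐ[P] P[fun ω => (1 - Z ω) * Y ω|mX])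
    (hint : Integrable (fun ω => w ω * ((1 - Z ω) * (Y ω - mu0 ω))) P) :
    ∫ ω, w ω * ((1 - Z ω) * (Y ω - mu0 ω)) ∂P = 0 := by
  have hcontrol_condExp : P[fun ω => (1 - Z ω) * Y ω|mX] =ᵐ[P]
      mu0 * P[fun ω => 1 - Z ω|mX] := by
    filter_upwards [hmu0, condExp_one_sub hmX hZint, heX] with ω hmu hD heω
    rw [Pi.mul_apply, hD, ← heω, ← hmu]
  have hexpand (ω : Ω) : (1 - Z ω) * (Y ω - mu0 ω) = (1 - Z ω) * Y ω - mu0 ω * (1 - Z ω) := by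
    ring
  simp only [hexpand] at hint ⊢
  exact integral_mul_sub_mul_eq_zero hmX (A := fun ω => (1 - Z ω) * Y ω)
    (D := fun ω => 1 - Z ω) hw hmu0meas hcontrol_int ((integrable_const 1).sub hZint)
    hcontrol_condExp hint

end SensitivityModel

theorem att_eif_mean_zero_representation_general
    {Ω : Type*} [F : MeasurableSpace Ω] (P : Measure Ω) [IsProbabilityMeasure P]
    (Z Y1 Y0 Y : Ω → ℝ)
    (hZmeas : Measurable Z) (hZ01 : ∀ ω, Z ω = 0 ∨ Z ω = 1)
    (hY0int : Integrable Y0 P)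
    (hYdef : ∀ ω, Y ω = Z ω * Y1 ω + (1 - Z ω) * Y0 ω)
    (mX : MeasurableSpace Ω) (hmX : mX ≤ F)
    (eX : Ω → ℝ) (heXmeas : Measurable[mX] eX) (heX : eX =ᵐ[P] P[Z|mX])
    (hov : ∀ᵐ ω ∂P, 0 < eX ω ∧ eX ω < 1)
    (mu0 : Ω → ℝ) (hmu0meas : Measurable[mX] mu0)
    (hmu0 : (fun ω => mu0 ω * (1 - eX ω)) =ᵐ[P] P[fun ω => (1 - Z ω) * Y ω|mX])
    (eps0 : Ω → ℝ) (heps0meas : Measurable[mX] eps0)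
    (hsens0 : ∀ᵐ ω ∂P, (1 - eX ω) * (P[fun ω' => Z ω' * Y0 ω'|mX]) ω
        = eps0 ω * eX ω * (P[fun ω' => (1 - Z ω') * Y0 ω'|mX]) ω)
    (hint2 : Integrable (fun ω => Z ω * (eps0 ω * mu0 ω)
        + eps0 ω * eX ω * ((1 - Z ω) * (Y ω - mu0 ω)) / (1 - eX ω)) P) :
    ∫ ω, Z ω * Y0 ω ∂P
      = ∫ ω, (Z ω * (eps0 ω * mu0 ω)
          + eps0 ω * eX ω * ((1 - Z ω) * (Y ω - mu0 ω)) / (1 - eX ω)) ∂P := by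
  have hZ_bdd : ∀ ω, ‖Z ω‖ ≤ 1 := fun ω => by rcases hZ01 ω with h | h <;> simp [h]
  have hZint : Integrable Z P := .of_bound hZmeas.aestronglyMeasurable 1 (ae_of_all _ hZ_bdd)
  have hcontrol : (fun ω => (1 - Z ω) * Y0 ω) = fun ω => (1 - Z ω) * Y ω := by
    funext ω; rcases hZ01 ω with h | h <;> simp [hYdef, h]
  have hcontrol_int : Integrable (fun ω => (1 - Z ω) * Y ω) P := hcontrol ▸
    hY0int.bdd_mul (c := 1) (by fun_prop) (ae_of_all _ fun ω => by
      rcases hZ01 ω with h | h <;> simp [h])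
  have htreated_int : Integrable (fun ω => Z ω * (eps0 ω * mu0 ω)) P :=
    (hint2.bdd_mul hZmeas.aestronglyMeasurable (ae_of_all _ hZ_bdd)).congr
      (ae_of_all _ fun ω => by rcases hZ01 ω with h | h <;> simp [h])
  have hweight (ω : Ω) : eps0 ω * eX ω * ((1 - Z ω) * (Y ω - mu0 ω)) / (1 - eX ω)
      = eps0 ω * eX ω / (1 - eX ω) * ((1 - Z ω) * (Y ω - mu0 ω)) := by ring
  have hresidual_int : Integrable
      (fun ω => eps0 ω * eX ω / (1 - eX ω) * ((1 - Z ω) * (Y ω - mu0 ω))) P :=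
    (hint2.sub htreated_int).congr (ae_of_all _ fun ω => by simp [hweight])
  calc ∫ ω, Z ω * Y0 ω ∂P = ∫ ω, eps0 ω * mu0 ω * P[Z|mX] ω ∂P :=
        (integral_condExp hmX).symm.trans <| integral_congr_ae <|
          condExp_treated_control_outcome_eq hcontrol heX (hov.mono fun _ h => h.2) hmu0 hsens0
    _ = ∫ ω, eps0 ω * mu0 ω * Z ω ∂P :=
        (integral_mul_eq_integral_mul_condExp hmX (heps0meas.mul hmu0meas).stronglyMeasurable
          (htreated_int.congr (ae_of_all _ fun ω => mul_comm _ _)) hZint).symm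
    _ = ∫ ω, Z ω * (eps0 ω * mu0 ω) ∂P := by simp only [mul_comm]
    _ = _ := by
        simp only [hweight]
        rw [integral_add htreated_int hresidual_int, integral_weighted_control_residual_eq_zero hmX
          (w := fun ω => eps0 ω * eX ω / (1 - eX ω))
          ((heps0meas.mul heXmeas).div (measurable_const.sub heXmeas)) hmu0meas hZint
          hcontrol_int heX hmu0 hresidual_int, add_zero]

/-- Theorem S2 (mean-zero representation from the efficient influence function for
the counterfactual control mean among the treated). -/
theorem att_eif_mean_zero_representation
    {Ω : Type*} [F : MeasurableSpace Ω] (P : Measure Ω) [IsProbabilityMeasure P]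
    (Z Y1 Y0 Y : Ω → ℝ)
    (hZmeas : Measurable Z) (hZ01 : ∀ ω, Z ω = 0 ∨ Z ω = 1)
    (hY1int : Integrable Y1 P) (hY0int : Integrable Y0 P)
    (hYdef : ∀ ω, Y ω = Z ω * Y1 ω + (1 - Z ω) * Y0 ω)
    (mX : MeasurableSpace Ω) (hmX : mX ≤ F)
    (eX : Ω → ℝ) (heXmeas : Measurable[mX] eX) (heX : eX =ᵐ[P] P[Z|mX])
    (hov : ∀ᵐ ω ∂P, 0 < eX ω ∧ eX ω < 1)
    (mu0 : Ω → ℝ) (hmu0meas : Measurable[mX] mu0)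
    (hmu0 : (fun ω => mu0 ω * (1 - eX ω)) =ᵐ[P] P[fun ω => (1 - Z ω) * Y ω|mX])
    (eps0 : Ω → ℝ) (heps0meas : Measurable[mX] eps0)
    (heps0pos : ∀ᵐ ω ∂P, 0 < eps0 ω)
    (hsens0 : ∀ᵐ ω ∂P, (1 - eX ω) * (P[fun ω' => Z ω' * Y0 ω'|mX]) ω
        = eps0 ω * eX ω * (P[fun ω' => (1 - Z ω') * Y0 ω'|mX]) ω)
    (hint1 : Integrable (fun ω => Z ω * Y0 ω) P)
    (hint2 : Integrable (fun ω => Z ω * (eps0 ω * mu0 ω)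
        + eps0 ω * eX ω * ((1 - Z ω) * (Y ω - mu0 ω)) / (1 - eX ω)) P) :
    ∫ ω, Z ω * Y0 ω ∂P
      = ∫ ω, (Z ω * (eps0 ω * mu0 ω)
          + eps0 ω * eX ω * ((1 - Z ω) * (Y ω - mu0 ω)) / (1 - eX ω)) ∂P :=
  att_eif_mean_zero_representation_general (F := F) P Z Y1 Y0 Y hZmeas hZ01 hY0int hYdef mX hmX eX
    heXmeas heX hov mu0 hmu0meas hmu0 eps0 heps0meas hsens0 hint2
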